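/- For every integer t ≥ 21, the integer n = 111·2^t + 1919 satisfies s(n) = s(n^2) = 16, where s is the binary digit sum. -/

import Mathlib

/-- binary digit sum -/
def s (n : ℕ) : ℕ := (Nat.digits 2 n).sum

/-! For `t ≥ 21` the binary expansions of `111 * 2 ^ t` and `1919` do not overlap, and neither do
those of the three terms of `(111 * 2 ^ t + 1919) ^ 2 = 12321 * 2 ^ (2t) + 213009 * 2 ^ (t + 1) + 3682561`,
since `1919 < 2 ^ 11`, `213009 < 2 ^ 18` and `3682561 < 2 ^ 22`. Hence the digit sums add up:
`6 + 10 = 16` and `4 + 5 + 7 = 16`. -/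

theorem Nat.digits_sum_add_base_pow_mul {b k m n : ℕ} (hb : 1 < b) (hn : n < b ^ k) :
    (Nat.digits b (n + b ^ k * m)).sum = (Nat.digits b n).sum + (Nat.digits b m).sum := by
  rcases Nat.eq_zero_or_pos m with rfl | hm
  · simp
  have hlen : (Nat.digits b n).length ≤ k := (Nat.digits_length_le_iff hb n).2 hn
  obtain ⟨j, hk⟩ := Nat.exists_eq_add_of_le hlen
  rw [hk, ← Nat.digits_append_zeroes_append_digits hb hm]
  simp [List.sum_append]

theorem s_mul_two_pow_add {a c k : ℕ} (hc : c < 2 ^ k) : s (a * 2 ^ k + c) = s a + s c := by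
  rw [s, add_comm, mul_comm, Nat.digits_sum_add_base_pow_mul one_lt_two hc, add_comm, s, s]

theorem stmt_8 (t : ℕ) (ht : 21 ≤ t) :
    s (111 * 2 ^ t + 1919) = 16 ∧ s ((111 * 2 ^ t + 1919) ^ 2) = 16 := by
  obtain ⟨u, rfl⟩ := Nat.exists_eq_add_of_le' ht
  have h_lt {a k : ℕ} (hk : a < 2 ^ k) : a < 2 ^ (u + k) :=
    hk.trans_le (Nat.pow_le_pow_right two_pos (Nat.le_add_left k u))
  have h_sq : (111 * 2 ^ (u + 21) + 1919) ^ 2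
      = (12321 * 2 ^ (u + 20) + 213009) * 2 ^ (u + 22) + 3682561 := by ring
  constructor
  · rw [s_mul_two_pow_add (h_lt (k := 21) (by norm_num))]
    norm_num [s]
  · rw [h_sq, s_mul_two_pow_add (h_lt (k := 22) (by norm_num)),
      s_mul_two_pow_add (h_lt (k := 20) (by norm_num))]
    norm_num [s]
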